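/- For i = 1,2,3,4 let fᵢ, gᵢ, hᵢ ∈ ℂ with fᵢ·gᵢ·hᵢ = 1, and suppose L(f₁,g₁,h₁;λ)·L(f₂,g₂,h₂;λ) = L(f₃,g₃,h₃;λ)·L(f₄,g₄,h₄;λ) for all λ ∈ ℂ. Assume the componentwise distinctness f₁ ≠ f₃, g₁ ≠ g₃, h₁ ≠ h₃, f₂ ≠ f₄, g₂ ≠ g₄, h₂ ≠ h₄. Then there exist f₀, g₀, h₀ ∈ ℂ with f₀·g₀·h₀ = 1 such that L(f₀,g₀,h₀;λ)·L(f₁,g₁,h₁;λ)·L(f₂,g₂,h₂;λ) = (1+λ³)·I for all λ ∈ ℂ (I the 3×3 identity matrix); i.e., a flat connection with values in the set of such matrices on an elementary square of the square lattice extends across its diagonal. -/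
import Mathlib


open Matrix

/-- The transition matrix of the fgh-system. -/
def fghL (f g h lam : ℂ) : Matrix (Fin 3) (Fin 3) ℂ :=
  !![1, lam * f, 0; 0, 1, lam * g; lam * h, 0, 1]

/-- A flat connection with values in the fgh transition matrices on an
elementary square of the square lattice extends across its diagonal. -/
theorem flat_connection_extends_across_diagonal
    (f₁ f₂ f₃ f₄ g₁ g₂ g₃ g₄ h₁ h₂ h₃ h₄ : ℂ)
    (h1 : f₁ * g₁ * h₁ = 1) (h2 : f₂ * g₂ * h₂ = 1)
    (h3 : f₃ * g₃ * h₃ = 1) (h4 : f₄ * g₄ * h₄ = 1)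
    (hflat : ∀ lam : ℂ,
      fghL f₁ g₁ h₁ lam * fghL f₂ g₂ h₂ lam
        = fghL f₃ g₃ h₃ lam * fghL f₄ g₄ h₄ lam)
    (hf13 : f₁ ≠ f₃) (hg13 : g₁ ≠ g₃) (hh13 : h₁ ≠ h₃)
    (hf24 : f₂ ≠ f₄) (hg24 : g₂ ≠ g₄) (hh24 : h₂ ≠ h₄) :
    ∃ f₀ g₀ h₀ : ℂ, f₀ * g₀ * h₀ = 1 ∧
      ∀ lam : ℂ,
        fghL f₀ g₀ h₀ lam * fghL f₁ g₁ h₁ lam * fghL f₂ g₂ h₂ lam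
          = (1 + lam ^ 3) • (1 : Matrix (Fin 3) (Fin 3) ℂ) := by
  have H := hflat 1
  have ent : ∀ i j : Fin 3,
      (fghL f₁ g₁ h₁ 1 * fghL f₂ g₂ h₂ 1) i j
        = (fghL f₃ g₃ h₃ 1 * fghL f₄ g₄ h₄ 1) i j := by
    intro i j; rw [H]
  have hA : f₁ + f₂ = f₃ + f₄ := by
    have := ent 0 1
    simp [fghL, Matrix.mul_apply, Fin.sum_univ_three] at this
    linear_combination this
  have hB : g₁ + g₂ = g₃ + g₄ := by
    have := ent 1 2
    simp [fghL, Matrix.mul_apply, Fin.sum_univ_three] at this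
    linear_combination this
  have hC : h₁ + h₂ = h₃ + h₄ := by
    have := ent 2 0
    simp [fghL, Matrix.mul_apply, Fin.sum_univ_three] at this
    linear_combination this
  have hD : f₁ * g₂ = f₃ * g₄ := by
    have := ent 0 2
    simp [fghL, Matrix.mul_apply, Fin.sum_univ_three] at this
    linear_combination this
  have hE : g₁ * h₂ = g₃ * h₄ := by
    have := ent 1 0
    simp [fghL, Matrix.mul_apply, Fin.sum_univ_three] at this
    linear_combination this
  have hF : h₁ * f₂ = h₃ * f₄ := by
    have := ent 2 1
    simp [fghL, Matrix.mul_apply, Fin.sum_univ_three] at this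
    linear_combination this
  -- the three key cross relations
  have kgh : (g₁ + g₂) * (h₁ + h₂) = g₁ * h₂ := by
    have key : (f₃ - f₁) * ((g₁ + g₂) * (h₁ + h₂) - g₁ * h₂) = 0 := by
      linear_combination h3 - h1 + f₃ * g₃ * hC + f₃ * (h₁ + h₂) * hB - f₃ * hE
        - (h₁ + h₂) * hD
    have hne : f₃ - f₁ ≠ 0 := sub_ne_zero.mpr (Ne.symm hf13)
    have h0 := (mul_eq_zero.mp key).resolve_left hne
    linear_combination h0
  have khf : (h₁ + h₂) * (f₁ + f₂) = h₁ * f₂ := by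
    have key : (g₃ - g₁) * ((h₁ + h₂) * (f₁ + f₂) - h₁ * f₂) = 0 := by
      linear_combination h3 - h1 + g₃ * h₃ * hA + g₃ * (f₁ + f₂) * hC - g₃ * hF
        - (f₁ + f₂) * hE
    have hne : g₃ - g₁ ≠ 0 := sub_ne_zero.mpr (Ne.symm hg13)
    have h0 := (mul_eq_zero.mp key).resolve_left hne
    linear_combination h0
  have kfg : (f₁ + f₂) * (g₁ + g₂) = f₁ * g₂ := by
    have key : (h₃ - h₁) * ((f₁ + f₂) * (g₁ + g₂) - f₁ * g₂) = 0 := by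
      linear_combination h3 - h1 + h₃ * f₃ * hB + h₃ * (g₁ + g₂) * hA - h₃ * hD
        - (g₁ + g₂) * hF
    have hne : h₃ - h₁ ≠ 0 := sub_ne_zero.mpr (Ne.symm hh13)
    have h0 := (mul_eq_zero.mp key).resolve_left hne
    linear_combination h0
  refine ⟨-(f₁ + f₂), -(g₁ + g₂), -(h₁ + h₂), ?_, ?_⟩
  · linear_combination (-(h₁ + h₂) - f₁ * g₂ * h₁ * h₂) * kfg
      + (f₂ * g₂ * h₂ + f₁ * g₂ * h₂) * h1 + (1 + f₁ * g₂ * h₁) * h2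
  · have hprod : (f₁ + f₂) * (g₁ + g₂) * (h₁ + h₂) = -1 := by
      linear_combination ((h₁ + h₂) + f₁ * g₂ * h₁ * h₂) * kfg
        - (f₂ * g₂ * h₂ + f₁ * g₂ * h₂) * h1 - (1 + f₁ * g₂ * h₁) * h2
    intro lam
    ext i j
    fin_cases i <;> fin_cases j <;>
      simp [fghL, Matrix.mul_apply, Fin.sum_univ_three, Matrix.one_apply] <;>
      ring_nf
    · linear_combination -(lam ^ 3) * hprod + lam ^ 3 * (f₁ + f₂) * kgh
    · linear_combination -(lam ^ 2) * kfg
    · linear_combination -(lam ^ 2) * kgh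
    · linear_combination -(lam ^ 3) * hprod + lam ^ 3 * (g₁ + g₂) * khf
    · linear_combination -(lam ^ 2) * khf
    · linear_combination -(lam ^ 3) * hprod + lam ^ 3 * (h₁ + h₂) * kfg
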